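/- With the setup of a monoidal category C with chosen duality data (x⁻, ε_x, η_x) for every object (satisfying the triangle identities), the functor inv : C ⥤ Cᵒᵖ (contravariant, tensor-reversing) carries a monoidal structure: there are natural isomorphisms χ_{x,y} : y⁻ ⊗ x⁻ ≅ (x ⊗ y)⁻ and ι : I ≅ I⁻ satisfying the associativity and unit coherence axioms of a monoidal functor C ⥤ (Cᵒᵖ)^rev. -/

import Mathlib

/-! Each `x` together with `x⁻`, `η_x`, `ε_x` is an exact pairing `(x⁻, x)`. In this language
`inv` acts on morphisms by left adjoint mates, and `χ_{x,y}`, `ι` are the comparison maps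
between two left duals of `x ⊗ y` (namely `(x ⊗ y)⁻` and `y⁻ ⊗ x⁻`) and of `I` (namely `I⁻`
and `I`), hence isomorphisms. A morphism `u` out of a left dual `X` of `Y` is determined by
its name `η ≫ u ▷ Y`, so each coherence axiom reduces to comparing names; the names of mates,
of tensor products of mates and of structural isomorphisms are all explicit, and they agree. -/

open CategoryTheory MonoidalCategory

variable {C : Type*} [Category C] [MonoidalCategory C]

/-- The contravariant action on morphisms induced by a choice of duals. -/
def dualMap (inv : C → C) (ε : ∀ x : C, x ⊗ inv x ≅ 𝟙_ C) (η : ∀ x : C, 𝟙_ C ≅ inv x ⊗ x)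
    {x y : C} (f : x ⟶ y) : inv y ⟶ inv x :=
  (λ_ (inv y)).inv ≫ ((η x).hom ▷ inv y) ≫ ((inv x ◁ f) ▷ inv y) ≫
    (α_ (inv x) y (inv y)).hom ≫ (inv x ◁ (ε y).hom) ≫ (ρ_ (inv x)).hom

/-- The tensorator `χ_{x,y} : (x ⊗ y)⁻ ⟶ y⁻ ⊗ x⁻` of the inverse functor, built from
`η_y`, `η_x` and `ε_{x ⊗ y}`. -/
def dualChi (inv : C → C) (ε : ∀ x : C, x ⊗ inv x ≅ 𝟙_ C) (η : ∀ x : C, 𝟙_ C ≅ inv x ⊗ x)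
    (x y : C) : inv (x ⊗ y) ⟶ inv y ⊗ inv x :=
  (λ_ (inv (x ⊗ y))).inv ≫ ((η y).hom ▷ inv (x ⊗ y)) ≫
    (α_ (inv y) y (inv (x ⊗ y))).hom ≫
    (inv y ◁ (((λ_ y).inv ≫ ((η x).hom ▷ y)) ▷ inv (x ⊗ y))) ≫
    (inv y ◁ ((α_ (inv x) x y).hom ▷ inv (x ⊗ y))) ≫
    (inv y ◁ (α_ (inv x) (x ⊗ y) (inv (x ⊗ y))).hom) ≫
    (inv y ◁ (inv x ◁ (ε (x ⊗ y)).hom)) ≫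
    (inv y ◁ (ρ_ (inv x)).hom)

/-- The unit comparison `ι : I⁻ ⟶ I`, given by `λ⁻¹` followed by `ε_I`. -/
def dualIota (inv : C → C) (ε : ∀ x : C, x ⊗ inv x ≅ 𝟙_ C) : inv (𝟙_ C) ⟶ 𝟙_ C :=
  (λ_ (inv (𝟙_ C))).inv ≫ (ε (𝟙_ C)).hom


namespace CategoryTheory.ExactPairing

theorem coevaluation_comp_whiskerRight_injective {X Y Z : C} [ExactPairing X Y] :
    Function.Injective fun u : X ⟶ Z => η_ X Y ≫ u ▷ Y := by
  intro u v h
  have name (w : X ⟶ Z) :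
      tensorRightHomEquiv (𝟙_ C) X Y Z ((λ_ X).hom ≫ w) = η_ X Y ≫ w ▷ Y := by
    dsimp only [tensorRightHomEquiv, Equiv.coe_fn_mk]
    monoidal
  simpa using
    (tensorRightHomEquiv (𝟙_ C) X Y Z).injective ((name u).trans (h.trans (name v).symm))

theorem coevaluation_comp_leftDualIso_hom {X₁ X₂ Y : C} [p₁ : ExactPairing X₁ Y]
    [p₂ : ExactPairing X₂ Y] : η_ X₁ Y ≫ (leftDualIso p₁ p₂).hom ▷ Y = η_ X₂ Y := by
  have h := @coevaluation_comp_leftAdjointMate C _ _ Y Y ⟨X₂⟩ ⟨X₁⟩ (𝟙 Y)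
  rw [MonoidalCategory.whiskerLeft_id, Category.comp_id] at h
  exact h

theorem coevaluation_comp_tensorHom_whiskerRight {X₁ X₂ Y₁ Y₂ X₁' X₂' Y₁' Y₂' : C}
    [ExactPairing X₁ Y₁] [ExactPairing X₂ Y₂] [ExactPairing X₁' Y₁'] [ExactPairing X₂' Y₂']
    {φ₁ : X₁' ⟶ X₁} {φ₂ : X₂' ⟶ X₂} {f₁ : Y₁ ⟶ Y₁'} {f₂ : Y₂ ⟶ Y₂'}
    (h₁ : η_ X₁' Y₁' ≫ φ₁ ▷ Y₁' = η_ X₁ Y₁ ≫ X₁ ◁ f₁)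
    (h₂ : η_ X₂' Y₂' ≫ φ₂ ▷ Y₂' = η_ X₂ Y₂ ≫ X₂ ◁ f₂) :
    η_ (X₁' ⊗ X₂') (Y₂' ⊗ Y₁') ≫ (φ₁ ⊗ₘ φ₂) ▷ _ =
      η_ (X₁ ⊗ X₂) (Y₂ ⊗ Y₁) ≫ _ ◁ (f₂ ⊗ₘ f₁) := by
  rw [tensor_coevaluation, tensor_coevaluation, MonoidalCategory.tensorHom_def,
    MonoidalCategory.tensorHom_def]
  calc _ = η_ X₁' Y₁' ⊗≫ (X₁' ◁ η_ X₂' Y₂' ≫ φ₁ ▷ (X₂' ⊗ Y₂')) ▷ Y₁' ⊗≫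
          (X₁ ◁ φ₂) ▷ (Y₂' ⊗ Y₁') ⊗≫ 𝟙 _ := by monoidal
    _ = (η_ X₁' Y₁' ≫ φ₁ ▷ Y₁') ⊗≫ X₁ ◁ (η_ X₂' Y₂' ≫ φ₂ ▷ Y₂') ▷ Y₁' ⊗≫ 𝟙 _ := by
        rw [whisker_exchange]; monoidal
    _ = η_ X₁ Y₁ ⊗≫ X₁ ◁ (𝟙_ C ◁ f₁ ≫ (η_ X₂ Y₂ ≫ X₂ ◁ f₂) ▷ Y₁') ⊗≫ 𝟙 _ := by
        rw [h₁, h₂]; monoidal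
    _ = η_ X₁ Y₁ ⊗≫ X₁ ◁ ((η_ X₂ Y₂ ≫ X₂ ◁ f₂) ▷ Y₁ ≫ (X₂ ⊗ Y₂') ◁ f₁) ⊗≫ 𝟙 _ := by
        rw [whisker_exchange]
    _ = _ := by monoidal

theorem coevaluation_comp_whiskerLeft_whiskerRight {W X X' Y Z : C} [ExactPairing W Z]
    [ExactPairing X Y] [ExactPairing X' Y] {φ : X' ⟶ X} (h : η_ X' Y ≫ φ ▷ Y = η_ X Y) :
    η_ (W ⊗ X') (Y ⊗ Z) ≫ (W ◁ φ) ▷ _ = η_ (W ⊗ X) (Y ⊗ Z) := by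
  simpa using coevaluation_comp_tensorHom_whiskerRight (φ₁ := 𝟙 W) (f₁ := 𝟙 Z) (f₂ := 𝟙 Y)
    (by simp) (by simpa using h)

theorem coevaluation_comp_whiskerRight_whiskerRight {W X X' Y Z : C} [ExactPairing W Z]
    [ExactPairing X Y] [ExactPairing X' Y] {φ : X' ⟶ X} (h : η_ X' Y ≫ φ ▷ Y = η_ X Y) :
    η_ (X' ⊗ W) (Z ⊗ Y) ≫ (φ ▷ W) ▷ _ = η_ (X ⊗ W) (Z ⊗ Y) := by
  simpa using coevaluation_comp_tensorHom_whiskerRight (φ₂ := 𝟙 W) (f₁ := 𝟙 Y) (f₂ := 𝟙 Z)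
    (by simpa using h) (by simp)

theorem coevaluation_comp_associator_inv_whiskerRight {X₁ X₂ X₃ Y₁ Y₂ Y₃ : C}
    [ExactPairing X₁ Y₁] [ExactPairing X₂ Y₂] [ExactPairing X₃ Y₃] :
    η_ (X₁ ⊗ X₂ ⊗ X₃) ((Y₃ ⊗ Y₂) ⊗ Y₁) ≫ (α_ X₁ X₂ X₃).inv ▷ _ =
      η_ ((X₁ ⊗ X₂) ⊗ X₃) (Y₃ ⊗ Y₂ ⊗ Y₁) ≫ _ ◁ (α_ Y₃ Y₂ Y₁).inv := by
  simp only [tensor_coevaluation]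
  monoidal

theorem coevaluation_unit : η_ (𝟙_ C) (𝟙_ C) = (ρ_ (𝟙_ C)).inv := rfl

theorem coevaluation_comp_rightUnitor_hom_whiskerRight {X Y : C} [ExactPairing X Y] :
    η_ (X ⊗ 𝟙_ C) (𝟙_ C ⊗ Y) ≫ (ρ_ X).hom ▷ _ = η_ X Y ≫ X ◁ (λ_ Y).inv := by
  simp only [tensor_coevaluation, coevaluation_unit]
  monoidal

theorem coevaluation_comp_leftUnitor_hom_whiskerRight {X Y : C} [ExactPairing X Y] :
    η_ (𝟙_ C ⊗ X) (Y ⊗ 𝟙_ C) ≫ (λ_ X).hom ▷ _ = η_ X Y ≫ X ◁ (ρ_ Y).inv := by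
  simp only [tensor_coevaluation, coevaluation_unit]
  monoidal

end CategoryTheory.ExactPairing

namespace CategoryTheory

open ExactPairing

section DualFamily

variable (D : C → C) [∀ x, ExactPairing (D x) x]

def dualMate {x y : C} (f : x ⟶ y) : D y ⟶ D x :=
  @leftAdjointMate C _ _ x y ⟨D x⟩ ⟨D y⟩ f

def dualTensorIso (x y : C) : D (x ⊗ y) ≅ D y ⊗ D x :=
  leftDualIso (Y := x ⊗ y) inferInstance ExactPairing.tensor

def dualUnitIso : D (𝟙_ C) ≅ 𝟙_ C :=
  leftDualIso (Y := 𝟙_ C) inferInstance exactPairingUnit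

variable {D}

theorem coevaluation_comp_dualMate {x y : C} (f : x ⟶ y) :
    η_ (D y) y ≫ dualMate D f ▷ y = η_ (D x) x ≫ D x ◁ f :=
  @coevaluation_comp_leftAdjointMate C _ _ x y ⟨D x⟩ ⟨D y⟩ f

theorem coevaluation_comp_dualTensorIso_hom (x y : C) :
    η_ (D (x ⊗ y)) (x ⊗ y) ≫ (dualTensorIso D x y).hom ▷ (x ⊗ y) = η_ (D y ⊗ D x) (x ⊗ y) :=
  coevaluation_comp_leftDualIso_hom

theorem coevaluation_comp_dualUnitIso_hom :
    η_ (D (𝟙_ C)) (𝟙_ C) ≫ (dualUnitIso D).hom ▷ 𝟙_ C = η_ (𝟙_ C) (𝟙_ C) :=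
  coevaluation_comp_leftDualIso_hom

theorem dualMate_tensorHom_comp_dualTensorIso_hom {x x' y y' : C} (f : x ⟶ x') (g : y ⟶ y') :
    dualMate D (f ⊗ₘ g) ≫ (dualTensorIso D x y).hom =
      (dualTensorIso D x' y').hom ≫ (dualMate D g ⊗ₘ dualMate D f) := by
  apply coevaluation_comp_whiskerRight_injective (Y := x' ⊗ y')
  dsimp only
  rw [comp_whiskerRight, comp_whiskerRight, reassoc_of% coevaluation_comp_dualMate,
    whisker_exchange, reassoc_of% coevaluation_comp_dualTensorIso_hom,
    reassoc_of% coevaluation_comp_dualTensorIso_hom,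
    coevaluation_comp_tensorHom_whiskerRight (coevaluation_comp_dualMate g)
      (coevaluation_comp_dualMate f)]

theorem dualMate_associator_hom_comp_dualTensorIso_hom (x y z : C) :
    dualMate D (α_ x y z).hom ≫ (dualTensorIso D (x ⊗ y) z).hom ≫
        D z ◁ (dualTensorIso D x y).hom ≫ (α_ (D z) (D y) (D x)).inv =
      (dualTensorIso D x (y ⊗ z)).hom ≫ (dualTensorIso D y z).hom ▷ D x := by
  apply coevaluation_comp_whiskerRight_injective (Y := x ⊗ y ⊗ z)
  dsimp only
  simp only [comp_whiskerRight]
  rw [reassoc_of% coevaluation_comp_dualMate, whisker_exchange_assoc, whisker_exchange_assoc,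
    whisker_exchange, reassoc_of% coevaluation_comp_dualTensorIso_hom,
    reassoc_of%
      coevaluation_comp_whiskerLeft_whiskerRight (coevaluation_comp_dualTensorIso_hom x y),
    reassoc_of% coevaluation_comp_associator_inv_whiskerRight,
    reassoc_of% coevaluation_comp_dualTensorIso_hom,
    coevaluation_comp_whiskerRight_whiskerRight (coevaluation_comp_dualTensorIso_hom y z)]
  simp

theorem dualMate_leftUnitor_hom_comp_dualTensorIso_hom (x : C) :
    dualMate D (λ_ x).hom ≫ (dualTensorIso D (𝟙_ C) x).hom ≫ D x ◁ (dualUnitIso D).hom ≫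
      (ρ_ (D x)).hom = 𝟙 (D x) := by
  apply coevaluation_comp_whiskerRight_injective (Y := x)
  dsimp only
  simp only [comp_whiskerRight]
  rw [reassoc_of% coevaluation_comp_dualMate, whisker_exchange_assoc, whisker_exchange_assoc,
    whisker_exchange, reassoc_of% coevaluation_comp_dualTensorIso_hom,
    reassoc_of% coevaluation_comp_whiskerLeft_whiskerRight coevaluation_comp_dualUnitIso_hom,
    reassoc_of% coevaluation_comp_rightUnitor_hom_whiskerRight]
  simp

theorem dualMate_rightUnitor_hom_comp_dualTensorIso_hom (x : C) :
    dualMate D (ρ_ x).hom ≫ (dualTensorIso D x (𝟙_ C)).hom ≫ (dualUnitIso D).hom ▷ D x ≫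
      (λ_ (D x)).hom = 𝟙 (D x) := by
  apply coevaluation_comp_whiskerRight_injective (Y := x)
  dsimp only
  simp only [comp_whiskerRight]
  rw [reassoc_of% coevaluation_comp_dualMate, whisker_exchange_assoc, whisker_exchange_assoc,
    whisker_exchange, reassoc_of% coevaluation_comp_dualTensorIso_hom,
    reassoc_of% coevaluation_comp_whiskerRight_whiskerRight coevaluation_comp_dualUnitIso_hom,
    reassoc_of% coevaluation_comp_leftUnitor_hom_whiskerRight]
  simp

end DualFamily

end CategoryTheory

abbrev exactPairingOfTriangles (inv : C → C) (ε : ∀ x : C, x ⊗ inv x ≅ 𝟙_ C)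
    (η : ∀ x : C, 𝟙_ C ≅ inv x ⊗ x)
    (triangle₁ : ∀ x : C,
      (ρ_ x).inv ≫ (x ◁ (η x).hom) ≫ (α_ x (inv x) x).inv ≫ ((ε x).hom ▷ x) ≫ (λ_ x).hom
        = 𝟙 x)
    (triangle₂ : ∀ x : C,
      (λ_ (inv x)).inv ≫ ((η x).hom ▷ inv x) ≫ (α_ (inv x) x (inv x)).hom ≫
        (inv x ◁ (ε x).hom) ≫ (ρ_ (inv x)).hom = 𝟙 (inv x))
    (x : C) : ExactPairing (inv x) x where
  coevaluation' := (η x).hom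
  evaluation' := (ε x).hom
  coevaluation_evaluation' := by simpa [Iso.eq_comp_inv, Iso.inv_comp_eq] using triangle₁ x
  evaluation_coevaluation' := by simpa [Iso.eq_comp_inv, Iso.inv_comp_eq] using triangle₂ x

section FromTriangles

variable {inv : C → C} {ε : ∀ x : C, x ⊗ inv x ≅ 𝟙_ C} {η : ∀ x : C, 𝟙_ C ≅ inv x ⊗ x}
  [∀ x, ExactPairing (inv x) x]

theorem dualMap_eq_dualMate (hη : ∀ x, η_ (inv x) x = (η x).hom)
    (hε : ∀ x, ε_ (inv x) x = (ε x).hom) {x y : C} (f : x ⟶ y) :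
    dualMap inv ε η f = dualMate inv f := by
  simp only [dualMap, dualMate, leftAdjointMate]
  rw [hη, hε]

theorem dualChi_eq_dualTensorIso_hom (hη : ∀ x, η_ (inv x) x = (η x).hom)
    (hε : ∀ x, ε_ (inv x) x = (ε x).hom) (x y : C) :
    dualChi inv ε η x y = (dualTensorIso inv x y).hom := by
  simp only [dualChi, dualTensorIso, leftDualIso, leftAdjointMate,
    ExactPairing.tensor_coevaluation]
  rw [hη, hη, hε]
  monoidal

theorem dualIota_eq_dualUnitIso_hom (hε : ∀ x, ε_ (inv x) x = (ε x).hom) :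
    dualIota inv ε = (dualUnitIso inv).hom := by
  simp only [dualIota, dualUnitIso, leftDualIso, leftAdjointMate]
  rw [hε, ExactPairing.coevaluation_unit]
  monoidal

end FromTriangles

/-- Given coherent duality data on a monoidal category `C` (inverses `x⁻` with `ε_x`, `η_x`
satisfying both triangle identities), the contravariant, tensor-reversing functor `inv`
carries a monoidal structure: the comparison maps `χ_{x,y} : (x ⊗ y)⁻ ⟶ y⁻ ⊗ x⁻` and
`ι : I⁻ ⟶ I` are isomorphisms, are natural, and satisfy the associativity and unit coherence
axioms of a monoidal functor `C ⥤ (Cᵒᵖ)^rev`. -/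
theorem dual_functor_monoidal
    (inv : C → C) (ε : ∀ x : C, x ⊗ inv x ≅ 𝟙_ C) (η : ∀ x : C, 𝟙_ C ≅ inv x ⊗ x)
    (triangle₁ : ∀ x : C,
      (ρ_ x).inv ≫ (x ◁ (η x).hom) ≫ (α_ x (inv x) x).inv ≫ ((ε x).hom ▷ x) ≫ (λ_ x).hom
        = 𝟙 x)
    (triangle₂ : ∀ x : C,
      (λ_ (inv x)).inv ≫ ((η x).hom ▷ inv x) ≫ (α_ (inv x) x (inv x)).hom ≫
        (inv x ◁ (ε x).hom) ≫ (ρ_ (inv x)).hom = 𝟙 (inv x)) :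
    (∀ x y : C, IsIso (dualChi inv ε η x y)) ∧
    IsIso (dualIota inv ε) ∧
    (∀ {x x' y y' : C} (f : x ⟶ x') (g : y ⟶ y'),
      dualMap inv ε η (f ⊗ₘ g) ≫ dualChi inv ε η x y =
        dualChi inv ε η x' y' ≫ (dualMap inv ε η g ⊗ₘ dualMap inv ε η f)) ∧
    (∀ x y z : C,
      dualMap inv ε η (α_ x y z).hom ≫ dualChi inv ε η (x ⊗ y) z ≫
          (inv z ◁ dualChi inv ε η x y) ≫ (α_ (inv z) (inv y) (inv x)).inv =
        dualChi inv ε η x (y ⊗ z) ≫ (dualChi inv ε η y z ▷ inv x)) ∧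
    (∀ x : C,
      dualMap inv ε η (λ_ x).hom ≫ dualChi inv ε η (𝟙_ C) x ≫
          (inv x ◁ dualIota inv ε) ≫ (ρ_ (inv x)).hom = 𝟙 (inv x)) ∧
    (∀ x : C,
      dualMap inv ε η (ρ_ x).hom ≫ dualChi inv ε η x (𝟙_ C) ≫
          (dualIota inv ε ▷ inv x) ≫ (λ_ (inv x)).hom = 𝟙 (inv x)) := by
  let _ := exactPairingOfTriangles inv ε η triangle₁ triangle₂
  have hη (x : C) : η_ (inv x) x = (η x).hom := rfl
  have hε (x : C) : ε_ (inv x) x = (ε x).hom := rfl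
  simp only [dualMap_eq_dualMate hη hε, dualChi_eq_dualTensorIso_hom hη hε,
    dualIota_eq_dualUnitIso_hom hε]
  exact ⟨fun _ _ => inferInstance, inferInstance,
    dualMate_tensorHom_comp_dualTensorIso_hom, dualMate_associator_hom_comp_dualTensorIso_hom,
    dualMate_leftUnitor_hom_comp_dualTensorIso_hom, dualMate_rightUnitor_hom_comp_dualTensorIso_hom⟩
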